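/- Soundness of the base-extension semantics for ILL: if Γ ⊢ φ in the natural deduction system N_ILL, then Γ ⊩ φ (i.e., Γ ⊩_B^{∅} φ for all bases B). -/

import Mathlib

abbrev Atom := ℕ
abbrev ASeq := Multiset Atom × Atom
abbrev Box := Multiset ASeq
abbrev ARule := Multiset Box × Box × Atom
abbrev Base := Set ARule

/-- An atom `d` is persistent in `B` if there is a rule `⟨∅, S, d⟩ ∈ B` with `S` nonempty. -/
def Persistent (B : Base) (d : Atom) : Prop :=
  ∃ S : Box, S ≠ 0 ∧ ((0 : Multiset Box), S, d) ∈ B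

/-- Atomic derivability in a base. -/
inductive Deriv (B : Base) : Multiset Atom → Atom → Prop
  | ref (p : Atom) : Deriv B {p} p
  | app (S : Box) (p : Atom)
      (bc : List (Box × Multiset Atom))
      (dc : List (Atom × Multiset Atom))
      (hrule : ((↑(bc.map Prod.fst) : Multiset Box), S, p) ∈ B)
      (hpers : ∀ x ∈ dc, Persistent B x.1)
      (hbox : ∀ x ∈ bc, ∀ s ∈ x.1, Deriv B (x.2 + s.1) s.2)
      (hd : ∀ x ∈ dc, Deriv B x.2 x.1)
      (hS : ∀ s ∈ S, Deriv B ((↑(dc.map Prod.fst) : Multiset Atom) + s.1) s.2) :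
      Deriv B ((bc.map Prod.snd).sum + (dc.map Prod.snd).sum) p

/-- Formulas of intuitionistic linear logic. -/
inductive Fml : Type
  | atom : Atom → Fml
  | top : Fml
  | zero : Fml
  | one : Fml
  | limp : Fml → Fml → Fml
  | tens : Fml → Fml → Fml
  | wth : Fml → Fml → Fml
  | plus : Fml → Fml → Fml
  | bang : Fml → Fml
deriving DecidableEq

/-- The degree of a formula. -/
def deg : Fml → ℕ
  | .atom _ => 1
  | .top => 2
  | .zero => 2
  | .one => 2
  | .limp φ ψ => deg φ + deg ψ + 1
  | .tens φ ψ => deg φ + deg ψ + 1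
  | .wth φ ψ => deg φ + deg ψ + 1
  | .plus φ ψ => deg φ + deg ψ + 1
  | .bang φ => deg φ + 1

theorem one_le_deg (φ : Fml) : 1 ≤ deg φ := by
  cases φ <;> simp [deg] <;> omega

mutual
  /-- Support `⊩_B^L φ` (empty left-hand side). -/
  def Supp : Base → Multiset Atom → Fml → Prop
    | B, L, .atom p => Deriv B L p
    | _, _, .top => True
    | B, L, .zero => ∀ (K : Multiset Atom) (p : Atom), Supp B (L + K) (.atom p)
    | B, L, .one => ∀ C : Base, B ⊆ C → ∀ (K : Multiset Atom) (p : Atom),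
        Supp C K (.atom p) → Supp C (L + K) (.atom p)
    | B, L, .limp φ ψ => SuppInf1 B L φ ψ
    | B, L, .tens φ ψ => ∀ C : Base, B ⊆ C → ∀ (K : Multiset Atom) (p : Atom),
        SuppInf2 C K φ ψ (.atom p) → Supp C (L + K) (.atom p)
    | B, L, .wth φ ψ => Supp B L φ ∧ Supp B L ψ
    | B, L, .plus φ ψ => ∀ C : Base, B ⊆ C → ∀ (K : Multiset Atom) (p : Atom),
        SuppInf1 C K φ (.atom p) → SuppInf1 C K ψ (.atom p) → Supp C (L + K) (.atom p)
    | B, L, .bang φ => ∀ C : Base, B ⊆ C → ∀ (K : Multiset Atom) (p : Atom),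
        (∀ D : Base, C ⊆ D → Supp D 0 φ → Supp D K (.atom p)) → Supp C (L + K) (.atom p)
  termination_by B L φ => 2 * deg φ
  decreasing_by
    all_goals
      try simp only [deg]
      try have h1 := one_le_deg φ
      try have h2 := one_le_deg ψ
      try have h3 := one_le_deg χ
      try have h4 := one_le_deg α
      try have h5 := one_le_deg β
      omega

  /-- The (Inf) clause for a singleton context `{φ} ⊩_B^L χ`. -/
  def SuppInf1 : Base → Multiset Atom → Fml → Fml → Prop
    | B, L, .bang α, χ => ∀ C : Base, B ⊆ C → Supp C 0 α → Supp C L χ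
    | B, L, φ, χ => ∀ C : Base, B ⊆ C → ∀ K : Multiset Atom,
        Supp C K φ → Supp C (L + K) χ
  termination_by B L φ χ => 2 * (deg φ + deg χ) - 1
  decreasing_by
    all_goals
      try simp only [deg]
      try have h1 := one_le_deg φ
      try have h2 := one_le_deg ψ
      try have h3 := one_le_deg χ
      try have h4 := one_le_deg α
      try have h5 := one_le_deg β
      omega

  /-- The (Inf) clause for a two-element context `{φ, ψ} ⊩_B^L χ`. -/
  def SuppInf2 : Base → Multiset Atom → Fml → Fml → Fml → Prop
    | B, L, .bang α, .bang β, χ => ∀ C : Base, B ⊆ C →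
        Supp C 0 α → Supp C 0 β → Supp C L χ
    | B, L, .bang α, ψ, χ => ∀ C : Base, B ⊆ C → ∀ K : Multiset Atom,
        Supp C 0 α → Supp C K ψ → Supp C (L + K) χ
    | B, L, φ, .bang β, χ => ∀ C : Base, B ⊆ C → ∀ K : Multiset Atom,
        Supp C 0 β → Supp C K φ → Supp C (L + K) χ
    | B, L, φ, ψ, χ => ∀ C : Base, B ⊆ C → ∀ K₁ K₂ : Multiset Atom,
        Supp C K₁ φ → Supp C K₂ ψ → Supp C (L + K₁ + K₂) χ
  termination_by B L φ ψ χ => 2 * (deg φ + deg ψ + deg χ) - 1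
  decreasing_by
    all_goals
      try simp only [deg]
      try have h1 := one_le_deg φ
      try have h2 := one_le_deg ψ
      try have h3 := one_le_deg χ
      try have h4 := one_le_deg α
      try have h5 := one_le_deg β
      omega
end

/-- Is the formula a `!`-formula? -/
def isBang : Fml → Bool
  | .bang _ => true
  | _ => false

/-- Strip a top-level `!`. -/
def unbang : Fml → Fml
  | .bang φ => φ
  | φ => φ

/-- Support for a multiset of formulas: the `(⊎)` clause. -/
def SuppMS (B : Base) (L : Multiset Atom) (Γ : Multiset Fml) : Prop :=
  ∃ l : List (Fml × Multiset Atom), (↑(l.map Prod.fst) : Multiset Fml) = Γ ∧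
    (l.map Prod.snd).sum = L ∧ ∀ x ∈ l, Supp B x.2 x.1

/-- The official (Inf) clause: `Γ ⊩_B^L φ`, where `Γ = !Δ ⊎ Θ`. -/
def SuppSeq (B : Base) (L : Multiset Atom) (Γ : Multiset Fml) (φ : Fml) : Prop :=
  ∀ C : Base, B ⊆ C → ∀ K : Multiset Atom,
    SuppMS C 0 ((Γ.filter (fun ψ => isBang ψ = true)).map unbang) →
    SuppMS C K (Γ.filter (fun ψ => isBang ψ = false)) →
    Supp C (L + K) φ

/-- Validity of a sequent `(Γ : φ)`. -/
def Valid (Γ : Multiset Fml) (φ : Fml) : Prop :=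
  ∀ B : Base, SuppSeq B 0 Γ φ
/-- The natural deduction system N_ILL. -/
inductive NDeriv : Multiset Fml → Fml → Prop
  | ax (φ : Fml) : NDeriv {φ} φ
  | limpI {Γ : Multiset Fml} {φ ψ : Fml} :
      NDeriv (Γ + {φ}) ψ → NDeriv Γ (.limp φ ψ)
  | limpE {Γ Δ : Multiset Fml} {φ ψ : Fml} :
      NDeriv Γ (.limp φ ψ) → NDeriv Δ φ → NDeriv (Γ + Δ) ψ
  | tensI {Γ Δ : Multiset Fml} {φ ψ : Fml} :
      NDeriv Γ φ → NDeriv Δ ψ → NDeriv (Γ + Δ) (.tens φ ψ)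
  | tensE {Γ Δ : Multiset Fml} {φ ψ χ : Fml} :
      NDeriv Γ (.tens φ ψ) → NDeriv (Δ + {φ, ψ}) χ → NDeriv (Γ + Δ) χ
  | oneI : NDeriv 0 .one
  | oneE {Γ Δ : Multiset Fml} {φ : Fml} :
      NDeriv Γ .one → NDeriv Δ φ → NDeriv (Γ + Δ) φ
  | wthI {Γ : Multiset Fml} {φ ψ : Fml} :
      NDeriv Γ φ → NDeriv Γ ψ → NDeriv Γ (.wth φ ψ)
  | wthE1 {Γ : Multiset Fml} {φ ψ : Fml} : NDeriv Γ (.wth φ ψ) → NDeriv Γ φ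
  | wthE2 {Γ : Multiset Fml} {φ ψ : Fml} : NDeriv Γ (.wth φ ψ) → NDeriv Γ ψ
  | plusI1 {Γ : Multiset Fml} {φ ψ : Fml} : NDeriv Γ φ → NDeriv Γ (.plus φ ψ)
  | plusI2 {Γ : Multiset Fml} {φ ψ : Fml} : NDeriv Γ ψ → NDeriv Γ (.plus φ ψ)
  | plusE {Γ Δ : Multiset Fml} {φ ψ χ : Fml} :
      NDeriv Γ (.plus φ ψ) → NDeriv (Δ + {φ}) χ → NDeriv (Δ + {ψ}) χ →
      NDeriv (Γ + Δ) χ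
  | topI (l : List (Multiset Fml × Fml)) :
      (∀ x ∈ l, NDeriv x.1 x.2) → NDeriv (l.map Prod.fst).sum .top
  | zeroE {Δ : Multiset Fml} {χ : Fml} (l : List (Multiset Fml × Fml)) :
      (∀ x ∈ l, NDeriv x.1 x.2) → NDeriv Δ .zero →
      NDeriv ((l.map Prod.fst).sum + Δ) χ
  | prom {φ : Fml} (l : List (Multiset Fml × Fml)) :
      (∀ x ∈ l, NDeriv x.1 (.bang x.2)) →
      NDeriv (↑(l.map (fun x => Fml.bang x.2)) : Multiset Fml) φ →
      NDeriv (l.map Prod.fst).sum (.bang φ)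
  | der {Γ Δ : Multiset Fml} {φ ψ : Fml} :
      NDeriv Γ (.bang φ) → NDeriv (Δ + {φ}) ψ → NDeriv (Γ + Δ) ψ
  | wk {Γ Δ : Multiset Fml} {φ ψ : Fml} :
      NDeriv Γ (.bang φ) → NDeriv Δ ψ → NDeriv (Γ + Δ) ψ
  | ctr {Γ Δ : Multiset Fml} {φ ψ : Fml} :
      NDeriv Γ (.bang φ) → NDeriv (Δ + {.bang φ, .bang φ}) ψ → NDeriv (Γ + Δ) ψ

set_option maxHeartbeats 1000000

theorem persistentMono {B C : Base} (h : B ⊆ C) {d} : Persistent B d → Persistent C d :=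
  fun ⟨S, hS, hm⟩ => ⟨S, hS, h hm⟩

theorem derivMono {B C : Base} (h : B ⊆ C) {L p} (d : Deriv B L p) : Deriv C L p := by
  induction d with
  | ref p => exact .ref p
  | app S p bc dc hrule hpers hbox hd hS ih1 ih2 ih3 =>
      exact .app S p bc dc (h hrule) (fun x hx => persistentMono h (hpers x hx)) ih1 ih2 ih3

theorem fml_bang_cases (φ : Fml) : (∃ α, φ = .bang α) ∨ isBang φ = false := by
  cases φ <;> simp [isBang]

theorem suppInf1_bang {B L α χ} :
    SuppInf1 B L (.bang α) χ ↔ ∀ C : Base, B ⊆ C → Supp C 0 α → Supp C L χ := by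
  simp [SuppInf1]

theorem suppInf1_nonbang {B L φ χ} (h : isBang φ = false) :
    SuppInf1 B L φ χ ↔ ∀ C : Base, B ⊆ C → ∀ K, Supp C K φ → Supp C (L + K) χ := by
  cases φ <;> simp_all [SuppInf1, isBang]

theorem suppInf2_bb {B L α β χ} :
    SuppInf2 B L (.bang α) (.bang β) χ ↔
      ∀ C : Base, B ⊆ C → Supp C 0 α → Supp C 0 β → Supp C L χ := by
  simp [SuppInf2]

theorem suppInf2_bn {B L α ψ χ} (h : isBang ψ = false) :
    SuppInf2 B L (.bang α) ψ χ ↔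
      ∀ C : Base, B ⊆ C → ∀ K, Supp C 0 α → Supp C K ψ → Supp C (L + K) χ := by
  cases ψ <;> simp_all [SuppInf2, isBang]

theorem suppInf2_nb {B L φ β χ} (h : isBang φ = false) :
    SuppInf2 B L φ (.bang β) χ ↔
      ∀ C : Base, B ⊆ C → ∀ K, Supp C 0 β → Supp C K φ → Supp C (L + K) χ := by
  cases φ <;> simp_all [SuppInf2, isBang]

theorem suppInf2_nn {B L φ ψ χ} (hφ : isBang φ = false) (hψ : isBang ψ = false) :
    SuppInf2 B L φ ψ χ ↔
      ∀ C : Base, B ⊆ C → ∀ K₁ K₂, Supp C K₁ φ → Supp C K₂ ψ → Supp C (L + K₁ + K₂) χ := by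
  cases φ <;> cases ψ <;> simp_all [SuppInf2, isBang]

theorem suppInf1Mono {B C : Base} (h : B ⊆ C) {L φ χ} :
    SuppInf1 B L φ χ → SuppInf1 C L φ χ := by
  cases φ <;> simp only [SuppInf1] <;> exact fun s D hD => s D (h.trans hD)

theorem suppInf2Mono {B C : Base} (h : B ⊆ C) {L φ ψ χ} :
    SuppInf2 B L φ ψ χ → SuppInf2 C L φ ψ χ := by
  cases φ <;> cases ψ <;> simp only [SuppInf2] <;> exact fun s D hD => s D (h.trans hD)

theorem suppMono {B C : Base} (h : B ⊆ C) {L : Multiset Atom} {φ : Fml} :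
    Supp B L φ → Supp C L φ := by
  induction φ generalizing B C L with
  | atom p => simp only [Supp]; exact derivMono h
  | top => simp [Supp]
  | zero => simp only [Supp]; exact fun s K p => derivMono h (s K p)
  | one => simp only [Supp]; exact fun s D hD => s D (h.trans hD)
  | limp φ ψ ih1 ih2 => simp only [Supp]; exact suppInf1Mono h
  | tens φ ψ ih1 ih2 => simp only [Supp]; exact fun s D hD => s D (h.trans hD)
  | wth φ ψ ih1 ih2 => simp only [Supp]; exact fun s => ⟨ih1 h s.1, ih2 h s.2⟩
  | plus φ ψ ih1 ih2 => simp only [Supp]; exact fun s D hD => s D (h.trans hD)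
  | bang φ ih => simp only [Supp]; exact fun s D hD => s D (h.trans hD)

theorem supp_congr {B} {L L' : Multiset Atom} (h : L = L') {φ} : Supp B L φ → Supp B L' φ :=
  h ▸ id

theorem supp_atom {B L p} : Supp B L (.atom p) ↔ Deriv B L p := by simp [Supp]
theorem supp_top {B L} : Supp B L .top ↔ True := by simp [Supp]
theorem supp_zero {B L} : Supp B L .zero ↔ ∀ K p, Supp B (L + K) (.atom p) := by simp [Supp]
theorem supp_one {B L} : Supp B L .one ↔ ∀ C : Base, B ⊆ C → ∀ K p,
    Supp C K (.atom p) → Supp C (L + K) (.atom p) := by simp [Supp]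
theorem supp_limp {B L φ ψ} : Supp B L (.limp φ ψ) ↔ SuppInf1 B L φ ψ := by simp [Supp]
theorem supp_tens {B L φ ψ} : Supp B L (.tens φ ψ) ↔ ∀ C : Base, B ⊆ C → ∀ K p,
    SuppInf2 C K φ ψ (.atom p) → Supp C (L + K) (.atom p) := by simp [Supp]
theorem supp_wth {B L φ ψ} : Supp B L (.wth φ ψ) ↔ Supp B L φ ∧ Supp B L ψ := by simp [Supp]
theorem supp_plus {B L φ ψ} : Supp B L (.plus φ ψ) ↔ ∀ C : Base, B ⊆ C → ∀ K p,
    SuppInf1 C K φ (.atom p) → SuppInf1 C K ψ (.atom p) → Supp C (L + K) (.atom p) := by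
  simp [Supp]
theorem supp_bang {B L φ} : Supp B L (.bang φ) ↔ ∀ C : Base, B ⊆ C → ∀ K p,
    (∀ D : Base, C ⊆ D → Supp D 0 φ → Supp D K (.atom p)) → Supp C (L + K) (.atom p) := by
  simp [Supp]

theorem genElim (Q : Base → Multiset Atom → Atom → Prop) :
    ∀ (χ : Fml) (B : Base) (K L : Multiset Atom),
    (∀ C : Base, B ⊆ C → ∀ K' p, Q C K' p → Supp C (K + K') (.atom p)) →
    (∀ C : Base, B ⊆ C → ∀ M p,
      (∀ D : Base, C ⊆ D → ∀ N, Supp D (L + N) χ → Supp D (M + N) (.atom p)) → Q C M p) →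
    Supp B (L + K) χ := by
  intro χ
  induction χ with
  | atom q =>
      intro B K L hA hQ
      have main := hA B subset_rfl L q (hQ B subset_rfl L q (fun D _ N s => s))
      exact supp_congr (add_comm K L) main
  | top => intro B K L hA hQ; rw [supp_top]; trivial
  | zero =>
      intro B K L hA hQ
      rw [supp_zero]; intro K₂ p
      have main := hA B subset_rfl (L + K₂) p (hQ B subset_rfl (L + K₂) p
        (fun D _ N s => by
          rw [supp_zero] at s
          have hs := s K₂ p
          exact supp_congr (by abel) hs))
      exact supp_congr (by abel) main
  | one =>
      intro B K L hA hQ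
      rw [supp_one]; intro C hC K₂ p hp
      have main := hA C hC (L + K₂) p (hQ C hC (L + K₂) p
        (fun D hD N s => by
          rw [supp_one] at s
          have hs := s D subset_rfl K₂ p (suppMono hD hp)
          exact supp_congr (by abel) hs))
      exact supp_congr (by abel) main
  | tens φ' ψ' ih1 ih2 =>
      intro B K L hA hQ
      rw [supp_tens]; intro C hC K₂ p h2
      have main := hA C hC (L + K₂) p (hQ C hC (L + K₂) p
        (fun D hD N s => by
          rw [supp_tens] at s
          have hs := s D subset_rfl K₂ p (suppInf2Mono hD h2)
          exact supp_congr (by abel) hs))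
      exact supp_congr (by abel) main
  | plus φ' ψ' ih1 ih2 =>
      intro B K L hA hQ
      rw [supp_plus]; intro C hC K₂ p h2 h3
      have main := hA C hC (L + K₂) p (hQ C hC (L + K₂) p
        (fun D hD N s => by
          rw [supp_plus] at s
          have hs := s D subset_rfl K₂ p (suppInf1Mono hD h2) (suppInf1Mono hD h3)
          exact supp_congr (by abel) hs))
      exact supp_congr (by abel) main
  | bang α ih =>
      intro B K L hA hQ
      rw [supp_bang]; intro C hC K₂ p h2
      have main := hA C hC (L + K₂) p (hQ C hC (L + K₂) p
        (fun D hD N s => by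
          rw [supp_bang] at s
          have hs := s D subset_rfl K₂ p (fun E hE hα => h2 E (hD.trans hE) hα)
          exact supp_congr (by abel) hs))
      exact supp_congr (by abel) main
  | wth φ' ψ' ih1 ih2 =>
      intro B K L hA hQ
      rw [supp_wth]
      constructor
      · exact ih1 B K L hA (fun C hC M p f =>
          hQ C hC M p (fun D hD N s => f D hD N ((supp_wth.mp s).1)))
      · exact ih2 B K L hA (fun C hC M p f =>
          hQ C hC M p (fun D hD N s => f D hD N ((supp_wth.mp s).2)))
  | limp φ' ψ' ih1 ih2 =>
      intro B K L hA hQ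
      rw [supp_limp]
      rcases fml_bang_cases φ' with ⟨α, rfl⟩ | hb
      · rw [suppInf1_bang]
        intro C hC hα
        exact ih2 C K L (fun C' hC' => hA C' (hC.trans hC'))
          (fun C' hC' M p f => hQ C' (hC.trans hC') M p (fun D hD N s => by
            rw [supp_limp, suppInf1_bang] at s
            exact f D hD N (s D subset_rfl (suppMono (hC'.trans hD) hα))))
      · rw [suppInf1_nonbang hb]
        intro C hC K₂ hφ
        have main := ih2 C K (L + K₂) (fun C' hC' => hA C' (hC.trans hC'))
          (fun C' hC' M p f => hQ C' (hC.trans hC') M p (fun D hD N s => by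
            rw [supp_limp, suppInf1_nonbang hb] at s
            have hs := s D subset_rfl K₂ (suppMono (hC'.trans hD) hφ)
            exact f D hD N (supp_congr (by abel) hs)))
        exact supp_congr (by abel) main
theorem bangElim {B : Base} {K L α χ} (h1 : Supp B K (.bang α))
    (h2 : ∀ C : Base, B ⊆ C → Supp C 0 α → Supp C L χ) : Supp B (L + K) χ := by
  rw [supp_bang] at h1
  exact genElim (fun C K' p => ∀ D : Base, C ⊆ D → Supp D 0 α → Supp D K' (.atom p))
    χ B K L (fun C hC K' p q => h1 C hC K' p q)
    (fun C hC M p f D hD hα => by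
      have hs := f D hD 0 (by rw [add_zero]; exact h2 D (hC.trans hD) hα)
      rwa [add_zero] at hs)

theorem oneElim {B : Base} {K L χ} (h1 : Supp B K .one) (h2 : Supp B L χ) :
    Supp B (L + K) χ := by
  rw [supp_one] at h1
  exact genElim (fun C K' p => Supp C K' (.atom p)) χ B K L
    (fun C hC K' p q => h1 C hC K' p q)
    (fun C hC M p f => by
      have hs := f C subset_rfl 0 (by rw [add_zero]; exact suppMono hC h2)
      rwa [add_zero] at hs)

theorem zeroElim {B : Base} {K} (h1 : Supp B K .zero) (L : Multiset Atom) (χ : Fml) :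
    Supp B (L + K) χ := by
  rw [supp_zero] at h1
  exact genElim (fun _ _ _ => True) χ B K L
    (fun C hC K' p _ => suppMono hC (h1 K' p))
    (fun _ _ _ _ _ => trivial)

theorem suppInf1_mk {B C : Base} {L M : Multiset Atom} {φ χ : Fml} {p : Atom}
    (hC : B ⊆ C) (h2 : SuppInf1 B L φ χ)
    (f : ∀ D : Base, C ⊆ D → ∀ N, Supp D (L + N) χ → Supp D (M + N) (.atom p)) :
    SuppInf1 C M φ (.atom p) := by
  rcases fml_bang_cases φ with ⟨α, rfl⟩ | hb
  · rw [suppInf1_bang] at h2 ⊢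
    intro D hD hα
    have hs := f D hD 0 (by rw [add_zero]; exact h2 D (hC.trans hD) hα)
    rwa [add_zero] at hs
  · rw [suppInf1_nonbang hb] at h2 ⊢
    intro D hD K₁ hφ
    exact f D hD K₁ (h2 D (hC.trans hD) K₁ hφ)

theorem suppInf2_mk {B C : Base} {L M : Multiset Atom} {φ ψ χ : Fml} {p : Atom}
    (hC : B ⊆ C) (h2 : SuppInf2 B L φ ψ χ)
    (f : ∀ D : Base, C ⊆ D → ∀ N, Supp D (L + N) χ → Supp D (M + N) (.atom p)) :
    SuppInf2 C M φ ψ (.atom p) := by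
  rcases fml_bang_cases φ with ⟨α, rfl⟩ | hbφ <;> rcases fml_bang_cases ψ with ⟨β, rfl⟩ | hbψ
  · rw [suppInf2_bb] at h2 ⊢
    intro D hD hα hβ
    have hs := f D hD 0 (by rw [add_zero]; exact h2 D (hC.trans hD) hα hβ)
    rwa [add_zero] at hs
  · rw [suppInf2_bn hbψ] at h2 ⊢
    intro D hD K hα hψ
    exact f D hD K (h2 D (hC.trans hD) K hα hψ)
  · rw [suppInf2_nb hbφ] at h2 ⊢
    intro D hD K hβ hφ
    exact f D hD K (h2 D (hC.trans hD) K hβ hφ)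
  · rw [suppInf2_nn hbφ hbψ] at h2 ⊢
    intro D hD K₁ K₂ hφ hψ
    have hs := f D hD (K₁ + K₂)
      (supp_congr (by abel) (h2 D (hC.trans hD) K₁ K₂ hφ hψ))
    exact supp_congr (by abel) hs

theorem tensElim {B : Base} {K L φ ψ χ} (h1 : Supp B K (.tens φ ψ))
    (h2 : SuppInf2 B L φ ψ χ) : Supp B (L + K) χ := by
  rw [supp_tens] at h1
  exact genElim (fun C K' p => SuppInf2 C K' φ ψ (.atom p)) χ B K L
    (fun C hC K' p q => h1 C hC K' p q)
    (fun C hC M p f => suppInf2_mk hC h2 f)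

theorem plusElim {B : Base} {K L φ ψ χ} (h1 : Supp B K (.plus φ ψ))
    (h2 : SuppInf1 B L φ χ) (h3 : SuppInf1 B L ψ χ) : Supp B (L + K) χ := by
  rw [supp_plus] at h1
  exact genElim (fun C K' p => SuppInf1 C K' φ (.atom p) ∧ SuppInf1 C K' ψ (.atom p)) χ B K L
    (fun C hC K' p q => h1 C hC K' p q.1 q.2)
    (fun C hC M p f => ⟨suppInf1_mk hC h2 f, suppInf1_mk hC h3 f⟩)

theorem cut1 {B : Base} {K L φ χ} (h1 : Supp B K φ) (h2 : SuppInf1 B L φ χ) :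
    Supp B (L + K) χ := by
  rcases fml_bang_cases φ with ⟨α, rfl⟩ | hb
  · rw [suppInf1_bang] at h2
    exact bangElim h1 h2
  · rw [suppInf1_nonbang hb] at h2
    exact h2 B subset_rfl K h1

theorem cut2 {B : Base} {K₁ K₂ L φ ψ χ} (h1 : Supp B K₁ φ) (h1' : Supp B K₂ ψ)
    (h2 : SuppInf2 B L φ ψ χ) : Supp B (L + K₁ + K₂) χ := by
  rcases fml_bang_cases φ with ⟨α, rfl⟩ | hbφ <;> rcases fml_bang_cases ψ with ⟨β, rfl⟩ | hbψ
  · rw [suppInf2_bb] at h2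
    have main : Supp B ((L + K₁) + K₂) χ := bangElim h1' (fun C hC hβ =>
      bangElim (suppMono hC h1) (fun D hD hα => h2 D (hC.trans hD) hα (suppMono hD hβ)))
    exact supp_congr (by abel) main
  · rw [suppInf2_bn hbψ] at h2
    have main : Supp B ((L + K₂) + K₁) χ := bangElim h1 (fun C hC hα =>
      h2 C hC K₂ hα (suppMono hC h1'))
    exact supp_congr (by abel) main
  · rw [suppInf2_nb hbφ] at h2
    have main : Supp B ((L + K₁) + K₂) χ := bangElim h1' (fun C hC hβ =>
      h2 C hC K₁ hβ (suppMono hC h1))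
    exact supp_congr (by abel) main
  · rw [suppInf2_nn hbφ hbψ] at h2
    exact h2 B subset_rfl K₁ K₂ h1 h1'
abbrev bangs (Γ : Multiset Fml) : Multiset Fml :=
  (Γ.filter (fun ψ => isBang ψ = true)).map unbang
abbrev nbs (Γ : Multiset Fml) : Multiset Fml := Γ.filter (fun ψ => isBang ψ = false)

theorem bangs_add {Γ Δ} : bangs (Γ + Δ) = bangs Γ + bangs Δ := by
  simp [bangs, Multiset.filter_add]
theorem nbs_add {Γ Δ} : nbs (Γ + Δ) = nbs Γ + nbs Δ := by
  simp [nbs, Multiset.filter_add]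
theorem bangs_zero : bangs 0 = 0 := rfl
theorem nbs_zero : nbs 0 = 0 := rfl
theorem bangs_bsingle {α} : bangs ({.bang α} : Multiset Fml) = {α} := by
  rfl
theorem nbs_bsingle {α} : nbs ({.bang α} : Multiset Fml) = 0 := by
  rfl
theorem bangs_nsingle {φ} (h : isBang φ = false) : bangs ({φ} : Multiset Fml) = 0 := by
  simp [bangs, Multiset.filter_singleton, h]
theorem nbs_nsingle {φ} (h : isBang φ = false) : nbs ({φ} : Multiset Fml) = {φ} := by
  simp [nbs, Multiset.filter_singleton, h]

theorem suppMS_nil {B : Base} : SuppMS B 0 0 := ⟨[], by simp, by simp, by simp⟩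

theorem suppMS_congr {B : Base} {K K' Γ} (h : K = K') : SuppMS B K Γ → SuppMS B K' Γ :=
  h ▸ id

theorem suppMS_mono {B C : Base} (h : B ⊆ C) {L Γ} : SuppMS B L Γ → SuppMS C L Γ :=
  fun ⟨l, h1, h2, h3⟩ => ⟨l, h1, h2, fun x hx => suppMono h (h3 x hx)⟩

theorem suppMS_single_mk {B : Base} {K φ} (h : Supp B K φ) : SuppMS B K {φ} :=
  ⟨[(φ, K)], by simp, by simp, by simpa⟩

theorem suppMS_single_elim {B : Base} {K φ} (h : SuppMS B K {φ}) : Supp B K φ := by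
  obtain ⟨l, h1, h2, h3⟩ := h
  rcases l with _ | ⟨x, _ | ⟨y, t⟩⟩
  · simp at h1
  · have e : x.1 = φ := by simpa using h1
    have hx := h3 x (by simp)
    rw [e] at hx
    have e2 : x.2 = K := by simpa using h2
    rwa [e2] at hx
  · have := congrArg Multiset.card h1
    simp at this

theorem suppMS_zero_elim {B : Base} {K} (h : SuppMS B K 0) : K = 0 := by
  obtain ⟨l, h1, h2, h3⟩ := h
  rcases l with _ | ⟨x, t⟩
  · simpa using h2.symm
  · simp at h1

theorem suppMS_add {B : Base} {K₁ K₂ Γ Δ} (h1 : SuppMS B K₁ Γ) (h2 : SuppMS B K₂ Δ) :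
    SuppMS B (K₁ + K₂) (Γ + Δ) := by
  obtain ⟨l1, a1, b1, c1⟩ := h1
  obtain ⟨l2, a2, b2, c2⟩ := h2
  refine ⟨l1 ++ l2, by rw [List.map_append, ← Multiset.coe_add, a1, a2], by simp [b1, b2], fun x hx => ?_⟩
  rcases List.mem_append.mp hx with h | h
  · exact c1 x h
  · exact c2 x h

theorem suppMS_cons {B : Base} {K L φ Γ} (h : Supp B K φ) (h2 : SuppMS B L Γ) :
    SuppMS B (K + L) (φ ::ₘ Γ) := by
  have := suppMS_add (suppMS_single_mk h) h2
  rwa [Multiset.singleton_add] at this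

theorem suppMS_split_aux {B : Base} : ∀ (l : List (Fml × Multiset Atom)) {K}
    {Γ Δ : Multiset Fml},
    (↑(l.map Prod.fst) : Multiset Fml) = Γ + Δ → (l.map Prod.snd).sum = K →
    (∀ x ∈ l, Supp B x.2 x.1) →
    ∃ K₁ K₂, K = K₁ + K₂ ∧ SuppMS B K₁ Γ ∧ SuppMS B K₂ Δ := by
  intro l
  induction l with
  | nil =>
    intro K Γ Δ h1 h2 h3
    have h0 : Γ + Δ = 0 := by simpa using h1.symm
    have hc := congrArg Multiset.card h0
    simp only [Multiset.card_add, Multiset.card_zero] at hc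
    have hΓ : Γ = 0 := by rw [← Multiset.card_eq_zero]; omega
    have hΔ : Δ = 0 := by rw [← Multiset.card_eq_zero]; omega
    subst hΓ; subst hΔ
    refine ⟨0, 0, by simpa using h2.symm, suppMS_nil, suppMS_nil⟩
  | cons x t ih =>
    intro K Γ Δ h1 h2 h3
    have h1' : x.1 ::ₘ (↑(t.map Prod.fst) : Multiset Fml) = Γ + Δ := by simpa using h1
    have hx : x.1 ∈ Γ + Δ := by rw [← h1']; simp
    have htail : ∀ y ∈ t, Supp B y.2 y.1 := fun y hy => h3 y (List.mem_cons_of_mem _ hy)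
    have hK : K = x.2 + (t.map Prod.snd).sum := by rw [← h2]; simp
    rcases Multiset.mem_add.mp hx with hm | hm
    · have e : x.1 ::ₘ Γ.erase x.1 = Γ := Multiset.cons_erase hm
      have h1'' : (↑(t.map Prod.fst) : Multiset Fml) = Γ.erase x.1 + Δ := by
        have : x.1 ::ₘ (↑(t.map Prod.fst) : Multiset Fml) = x.1 ::ₘ (Γ.erase x.1 + Δ) := by
          rw [← Multiset.cons_add, e]; exact h1'
        exact (Multiset.cons_inj_right _).mp this
      obtain ⟨K₁, K₂, hk, m1, m2⟩ := ih h1'' rfl htail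
      refine ⟨x.2 + K₁, K₂, by rw [hK, hk]; abel, ?_, m2⟩
      rw [← e]
      exact suppMS_cons (h3 x (List.mem_cons_self)) m1
    · have e : x.1 ::ₘ Δ.erase x.1 = Δ := Multiset.cons_erase hm
      have h1'' : (↑(t.map Prod.fst) : Multiset Fml) = Γ + Δ.erase x.1 := by
        have : x.1 ::ₘ (↑(t.map Prod.fst) : Multiset Fml) = x.1 ::ₘ (Γ + Δ.erase x.1) := by
          rw [← Multiset.add_cons, e]; exact h1'
        exact (Multiset.cons_inj_right _).mp this
      obtain ⟨K₁, K₂, hk, m1, m2⟩ := ih h1'' rfl htail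
      refine ⟨K₁, x.2 + K₂, by rw [hK, hk]; abel, m1, ?_⟩
      rw [← e]
      exact suppMS_cons (h3 x (List.mem_cons_self)) m2

theorem suppMS_split {B : Base} {K} {Γ Δ : Multiset Fml} (h : SuppMS B K (Γ + Δ)) :
    ∃ K₁ K₂, K = K₁ + K₂ ∧ SuppMS B K₁ Γ ∧ SuppMS B K₂ Δ := by
  obtain ⟨l, h1, h2, h3⟩ := h
  exact suppMS_split_aux l h1 h2 h3

theorem suppMS_split0 {B : Base} {Γ Δ : Multiset Fml} (h : SuppMS B 0 (Γ + Δ)) :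
    SuppMS B 0 Γ ∧ SuppMS B 0 Δ := by
  obtain ⟨K₁, K₂, hk, m1, m2⟩ := suppMS_split h
  have hc := congrArg Multiset.card hk
  simp only [Multiset.card_add, Multiset.card_zero] at hc
  have e1 : K₁ = 0 := by rw [← Multiset.card_eq_zero]; omega
  have e2 : K₂ = 0 := by rw [← Multiset.card_eq_zero]; omega
  exact ⟨e1 ▸ m1, e2 ▸ m2⟩
theorem valid_elim {Γ φ} (v : Valid Γ φ) (C : Base) (K)
    (h1 : SuppMS C 0 (bangs Γ)) (h2 : SuppMS C K (nbs Γ)) : Supp C K φ := by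
  have := v C C subset_rfl K h1 h2
  rwa [zero_add] at this

theorem valid_intro {Γ φ}
    (h : ∀ (C : Base) K, SuppMS C 0 (bangs Γ) → SuppMS C K (nbs Γ) → Supp C K φ) :
    Valid Γ φ := by
  intro B C hC K h1 h2
  exact supp_congr (zero_add K).symm (h C K h1 h2)

theorem mkInf1 {Γ : Multiset Fml} {φ ψ : Fml} (v : Valid (Γ + {φ}) ψ) {C : Base} {K}
    (h1 : SuppMS C 0 (bangs Γ)) (h2 : SuppMS C K (nbs Γ)) : SuppInf1 C K φ ψ := by
  rcases fml_bang_cases φ with ⟨α, rfl⟩ | hb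
  · rw [suppInf1_bang]
    intro D hD hα
    apply valid_elim v D K
    · rw [bangs_add, bangs_bsingle]
      have : SuppMS D (0 + 0) (bangs Γ + {α}) :=
        suppMS_add (suppMS_mono hD h1) (suppMS_single_mk hα)
      simpa using this
    · rw [nbs_add, nbs_bsingle, add_zero]
      exact suppMS_mono hD h2
  · rw [suppInf1_nonbang hb]
    intro D hD K' hφ
    apply valid_elim v D (K + K')
    · rw [bangs_add, bangs_nsingle hb, add_zero]
      exact suppMS_mono hD h1
    · rw [nbs_add, nbs_nsingle hb]
      exact suppMS_add (suppMS_mono hD h2) (suppMS_single_mk hφ)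

theorem pair_eq (φ ψ : Fml) : ({φ, ψ} : Multiset Fml) = {φ} + {ψ} :=
  (Multiset.singleton_add _ _).symm

theorem mkInf2 {Γ : Multiset Fml} {φ ψ χ : Fml} (v : Valid (Γ + {φ, ψ}) χ) {C : Base} {K}
    (h1 : SuppMS C 0 (bangs Γ)) (h2 : SuppMS C K (nbs Γ)) : SuppInf2 C K φ ψ χ := by
  rcases fml_bang_cases φ with ⟨α, rfl⟩ | hbφ <;> rcases fml_bang_cases ψ with ⟨β, rfl⟩ | hbψ
  · rw [suppInf2_bb]
    intro D hD hα hβ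
    apply valid_elim v D K
    · rw [pair_eq, ← add_assoc, bangs_add, bangs_add, bangs_bsingle, bangs_bsingle]
      have : SuppMS D (0 + 0 + 0) (bangs Γ + {α} + {β}) :=
        suppMS_add (suppMS_add (suppMS_mono hD h1) (suppMS_single_mk hα)) (suppMS_single_mk hβ)
      simpa using this
    · rw [pair_eq, ← add_assoc, nbs_add, nbs_add, nbs_bsingle, nbs_bsingle, add_zero, add_zero]
      exact suppMS_mono hD h2
  · rw [suppInf2_bn hbψ]
    intro D hD K' hα hψ'
    apply valid_elim v D (K + K')
    · rw [pair_eq, ← add_assoc, bangs_add, bangs_add, bangs_bsingle, bangs_nsingle hbψ, add_zero]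
      have : SuppMS D (0 + 0) (bangs Γ + {α}) :=
        suppMS_add (suppMS_mono hD h1) (suppMS_single_mk hα)
      simpa using this
    · rw [pair_eq, ← add_assoc, nbs_add, nbs_add, nbs_bsingle, add_zero, nbs_nsingle hbψ]
      exact suppMS_add (suppMS_mono hD h2) (suppMS_single_mk hψ')
  · rw [suppInf2_nb hbφ]
    intro D hD K' hβ hφ'
    apply valid_elim v D (K + K')
    · rw [pair_eq, ← add_assoc, bangs_add, bangs_add, bangs_nsingle hbφ, add_zero, bangs_bsingle]
      have : SuppMS D (0 + 0) (bangs Γ + {β}) :=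
        suppMS_add (suppMS_mono hD h1) (suppMS_single_mk hβ)
      simpa using this
    · rw [pair_eq, ← add_assoc, nbs_add, nbs_add, nbs_nsingle hbφ, nbs_bsingle, add_zero]
      exact suppMS_add (suppMS_mono hD h2) (suppMS_single_mk hφ')
  · rw [suppInf2_nn hbφ hbψ]
    intro D hD K₁ K₂ hφ' hψ'
    apply valid_elim v D (K + K₁ + K₂)
    · rw [pair_eq, ← add_assoc, bangs_add, bangs_add, bangs_nsingle hbφ, bangs_nsingle hbψ,
        add_zero, add_zero]
      exact suppMS_mono hD h1
    · rw [pair_eq, ← add_assoc, nbs_add, nbs_add, nbs_nsingle hbφ, nbs_nsingle hbψ]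
      exact suppMS_add (suppMS_add (suppMS_mono hD h2) (suppMS_single_mk hφ')) (suppMS_single_mk hψ')

theorem suppMS_zeros {B : Base} : ∀ (ks : List (Fml × Multiset Atom)),
    (∀ y ∈ ks, Supp B 0 y.1) → SuppMS B 0 (↑(ks.map Prod.fst) : Multiset Fml) := by
  intro ks
  induction ks with
  | nil => intro _; simpa using (suppMS_nil (B := B))
  | cons x t ih =>
    intro h
    have := suppMS_cons (h x (List.mem_cons_self))
      (ih (fun y hy => h y (List.mem_cons_of_mem _ hy)))
    simpa using this

theorem bangs_banglist : ∀ (l : List (Multiset Fml × Fml)),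
    bangs (↑(l.map fun x => Fml.bang x.2) : Multiset Fml) = ↑(l.map Prod.snd) := by
  intro l
  induction l with
  | nil => rfl
  | cons x t ih =>
    simp only [List.map_cons, ← Multiset.cons_coe]
    rw [show ((Fml.bang x.2) ::ₘ (↑(t.map fun x => Fml.bang x.2) : Multiset Fml)) =
        {Fml.bang x.2} + ↑(t.map fun x => Fml.bang x.2) from (Multiset.singleton_add _ _).symm,
      bangs_add, bangs_bsingle, ih, Multiset.singleton_add]

theorem nbs_banglist : ∀ (l : List (Multiset Fml × Fml)),
    nbs (↑(l.map fun x => Fml.bang x.2) : Multiset Fml) = 0 := by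
  intro l
  induction l with
  | nil => rfl
  | cons x t ih =>
    simp only [List.map_cons, ← Multiset.cons_coe]
    rw [show ((Fml.bang x.2) ::ₘ (↑(t.map fun x => Fml.bang x.2) : Multiset Fml)) =
        {Fml.bang x.2} + ↑(t.map fun x => Fml.bang x.2) from (Multiset.singleton_add _ _).symm,
      nbs_add, nbs_bsingle, ih, add_zero]

theorem prom_split {C : Base} : ∀ (l : List (Multiset Fml × Fml)),
    (∀ x ∈ l, Valid x.1 (.bang x.2)) → ∀ K,
    SuppMS C 0 (bangs (l.map Prod.fst).sum) → SuppMS C K (nbs (l.map Prod.fst).sum) →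
    ∃ ks : List (Fml × Multiset Atom), ks.map Prod.fst = l.map Prod.snd ∧
      (ks.map Prod.snd).sum = K ∧ ∀ x ∈ ks, Supp C x.2 (.bang x.1) := by
  intro l
  induction l with
  | nil =>
    intro hv K h1 h2
    refine ⟨[], by simp, ?_, by simp⟩
    have : K = 0 := suppMS_zero_elim (by simpa using h2)
    simpa using this.symm
  | cons x t ih =>
    intro hv K h1 h2
    rw [List.map_cons, List.sum_cons, bangs_add] at h1
    rw [List.map_cons, List.sum_cons, nbs_add] at h2
    obtain ⟨e1, e2⟩ := suppMS_split0 h1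
    obtain ⟨K₁, K₂, rfl, f1, f2⟩ := suppMS_split h2
    obtain ⟨ks, g1, g2, g3⟩ := ih (fun y hy => hv y (List.mem_cons_of_mem _ hy)) K₂ e2 f2
    have sx : Supp C K₁ (.bang x.2) := valid_elim (hv x (List.mem_cons_self)) C K₁ e1 f1
    refine ⟨(x.2, K₁) :: ks, by simp [g1], by simp [g2], ?_⟩
    intro y hy
    rcases List.mem_cons.mp hy with rfl | hy
    · exact sx
    · exact g3 y hy

theorem promAux : ∀ (ks : List (Fml × Multiset Atom)) (D : Base),
    (∀ x ∈ ks, Supp D x.2 (.bang x.1)) → ∀ (K' : Multiset Atom) (p : Atom),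
    (∀ E : Base, D ⊆ E → (∀ x ∈ ks, Supp E 0 x.1) → Supp E K' (.atom p)) →
    Supp D ((ks.map Prod.snd).sum + K') (.atom p) := by
  intro ks
  induction ks with
  | nil =>
    intro D h K' p hfin
    have := hfin D subset_rfl (by simp)
    simpa using this
  | cons x t ih =>
    intro D h K' p hfin
    have hb := h x (List.mem_cons_self)
    rw [supp_bang] at hb
    have main := hb D subset_rfl ((t.map Prod.snd).sum + K') p (fun E hE hα =>
      ih E (fun y hy => suppMono hE (h y (List.mem_cons_of_mem _ hy))) K' p
        (fun F hF hall => hfin F (hE.trans hF) (fun y hy => by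
          rcases List.mem_cons.mp hy with rfl | hy
          · exact suppMono hF hα
          · exact hall y hy)))
    refine supp_congr ?_ main
    simp only [List.map_cons, List.sum_cons]
    abel
theorem soundness (Γ : Multiset Fml) (φ : Fml) (h : NDeriv Γ φ) : Valid Γ φ := by
  induction h with
  | ax φ =>
    apply valid_intro; intro C K h1 h2
    rcases fml_bang_cases φ with ⟨α, rfl⟩ | hb
    · rw [bangs_bsingle] at h1
      rw [nbs_bsingle] at h2
      have hK : K = 0 := suppMS_zero_elim h2
      subst hK
      have hα : Supp C 0 α := suppMS_single_elim h1
      rw [supp_bang]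
      intro D hD K' p hp
      exact supp_congr (zero_add K').symm (hp D subset_rfl (suppMono hD hα))
    · rw [bangs_nsingle hb] at h1
      rw [nbs_nsingle hb] at h2
      exact suppMS_single_elim h2
  | limpI hp ih =>
    apply valid_intro; intro C K h1 h2
    rw [supp_limp]
    exact mkInf1 ih h1 h2
  | limpE hp1 hp2 ih1 ih2 =>
    apply valid_intro; intro C K h1 h2
    rw [bangs_add] at h1; rw [nbs_add] at h2
    obtain ⟨hb1, hb2⟩ := suppMS_split0 h1
    obtain ⟨K₁, K₂, rfl, hn1, hn2⟩ := suppMS_split h2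
    have s1 := valid_elim ih1 C K₁ hb1 hn1
    have s2 := valid_elim ih2 C K₂ hb2 hn2
    rw [supp_limp] at s1
    exact cut1 s2 s1
  | tensI hp1 hp2 ih1 ih2 =>
    apply valid_intro; intro C K h1 h2
    rw [bangs_add] at h1; rw [nbs_add] at h2
    obtain ⟨hb1, hb2⟩ := suppMS_split0 h1
    obtain ⟨K₁, K₂, rfl, hn1, hn2⟩ := suppMS_split h2
    have s1 := valid_elim ih1 C K₁ hb1 hn1
    have s2 := valid_elim ih2 C K₂ hb2 hn2
    rw [supp_tens]
    intro D hD K' p hinf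
    have := cut2 (suppMono hD s1) (suppMono hD s2) hinf
    exact supp_congr (by abel) this
  | tensE hp1 hp2 ih1 ih2 =>
    apply valid_intro; intro C K h1 h2
    rw [bangs_add] at h1; rw [nbs_add] at h2
    obtain ⟨hb1, hb2⟩ := suppMS_split0 h1
    obtain ⟨K₁, K₂, rfl, hn1, hn2⟩ := suppMS_split h2
    have s1 := valid_elim ih1 C K₁ hb1 hn1
    have := tensElim s1 (mkInf2 ih2 hb2 hn2)
    exact supp_congr (by abel) this
  | oneI =>
    apply valid_intro; intro C K h1 h2
    have hK : K = 0 := suppMS_zero_elim h2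
    subst hK
    rw [supp_one]
    intro D hD K' p hp
    exact supp_congr (zero_add K').symm hp
  | oneE hp1 hp2 ih1 ih2 =>
    apply valid_intro; intro C K h1 h2
    rw [bangs_add] at h1; rw [nbs_add] at h2
    obtain ⟨hb1, hb2⟩ := suppMS_split0 h1
    obtain ⟨K₁, K₂, rfl, hn1, hn2⟩ := suppMS_split h2
    have s1 := valid_elim ih1 C K₁ hb1 hn1
    have s2 := valid_elim ih2 C K₂ hb2 hn2
    have := oneElim s1 s2
    exact supp_congr (by abel) this
  | wthI hp1 hp2 ih1 ih2 =>
    apply valid_intro; intro C K h1 h2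
    rw [supp_wth]
    exact ⟨valid_elim ih1 C K h1 h2, valid_elim ih2 C K h1 h2⟩
  | wthE1 hp ih =>
    apply valid_intro; intro C K h1 h2
    have := valid_elim ih C K h1 h2
    rw [supp_wth] at this
    exact this.1
  | wthE2 hp ih =>
    apply valid_intro; intro C K h1 h2
    have := valid_elim ih C K h1 h2
    rw [supp_wth] at this
    exact this.2
  | plusI1 hp ih =>
    apply valid_intro; intro C K h1 h2
    rw [supp_plus]
    intro D hD K' p hf hg
    have := cut1 (suppMono hD (valid_elim ih C K h1 h2)) hf
    exact supp_congr (by abel) this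
  | plusI2 hp ih =>
    apply valid_intro; intro C K h1 h2
    rw [supp_plus]
    intro D hD K' p hf hg
    have := cut1 (suppMono hD (valid_elim ih C K h1 h2)) hg
    exact supp_congr (by abel) this
  | plusE hp1 hp2 hp3 ih1 ih2 ih3 =>
    apply valid_intro; intro C K h1 h2
    rw [bangs_add] at h1; rw [nbs_add] at h2
    obtain ⟨hb1, hb2⟩ := suppMS_split0 h1
    obtain ⟨K₁, K₂, rfl, hn1, hn2⟩ := suppMS_split h2
    have s1 := valid_elim ih1 C K₁ hb1 hn1
    have := plusElim s1 (mkInf1 ih2 hb2 hn2) (mkInf1 ih3 hb2 hn2)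
    exact supp_congr (by abel) this
  | topI l hl ih =>
    apply valid_intro; intro C K h1 h2
    rw [supp_top]; trivial
  | zeroE l hl hΔ ihl ihΔ =>
    apply valid_intro; intro C K h1 h2
    rw [bangs_add] at h1; rw [nbs_add] at h2
    obtain ⟨hb1, hb2⟩ := suppMS_split0 h1
    obtain ⟨K₁, K₂, rfl, hn1, hn2⟩ := suppMS_split h2
    have s2 := valid_elim ihΔ C K₂ hb2 hn2
    exact zeroElim s2 K₁ _
  | prom l hl hmain ihl ihmain =>
    apply valid_intro; intro C K h1 h2
    obtain ⟨ks, g1, g2, g3⟩ := prom_split l ihl K h1 h2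
    rw [supp_bang]
    intro D hD K' p hp
    have main := promAux ks D (fun y hy => suppMono hD (g3 y hy)) K' p (fun E hE hall => by
      refine hp E hE (valid_elim ihmain E 0 ?_ ?_)
      · rw [bangs_banglist]
        have := suppMS_zeros ks hall
        rwa [g1] at this
      · rw [nbs_banglist]
        exact suppMS_nil)
    rw [g2] at main
    exact main
  | der hp1 hp2 ih1 ih2 =>
    rename_i Γ' Δ' φ' ψ'
    apply valid_intro; intro C K h1 h2
    rw [bangs_add] at h1; rw [nbs_add] at h2
    obtain ⟨hb1, hb2⟩ := suppMS_split0 h1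
    obtain ⟨K₁, K₂, rfl, hn1, hn2⟩ := suppMS_split h2
    have s1 := valid_elim ih1 C K₁ hb1 hn1
    rcases fml_bang_cases φ' with ⟨β, rfl⟩ | hb
    · have main : Supp C (K₂ + K₁) ψ' := bangElim s1 (fun D hD sb => by
        refine supp_congr (add_zero K₂) (bangElim sb (fun E hE hβ => ?_))
        refine valid_elim ih2 E K₂ ?_ ?_
        · rw [bangs_add, bangs_bsingle]
          have : SuppMS E (0 + 0) (bangs Δ' + ({β} : Multiset Fml)) :=
            suppMS_add (suppMS_mono (hD.trans hE) hb2) (suppMS_single_mk hβ)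
          simpa using this
        · rw [nbs_add, nbs_bsingle, add_zero]
          exact suppMS_mono (hD.trans hE) hn2)
      exact supp_congr (by abel) main
    · have main : Supp C (K₂ + K₁) ψ' := bangElim s1 (fun D hD hφ => by
        refine supp_congr (add_zero K₂) (valid_elim ih2 D (K₂ + 0) ?_ ?_)
        · rw [bangs_add, bangs_nsingle hb, add_zero]
          exact suppMS_mono hD hb2
        · rw [nbs_add, nbs_nsingle hb]
          exact suppMS_add (suppMS_mono hD hn2) (suppMS_single_mk hφ))
      exact supp_congr (by abel) main
  | wk hp1 hp2 ih1 ih2 =>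
    apply valid_intro; intro C K h1 h2
    rw [bangs_add] at h1; rw [nbs_add] at h2
    obtain ⟨hb1, hb2⟩ := suppMS_split0 h1
    obtain ⟨K₁, K₂, rfl, hn1, hn2⟩ := suppMS_split h2
    have s1 := valid_elim ih1 C K₁ hb1 hn1
    have s2 := valid_elim ih2 C K₂ hb2 hn2
    have := bangElim s1 (fun D hD _ => suppMono hD s2)
    exact supp_congr (by abel) this
  | ctr hp1 hp2 ih1 ih2 =>
    apply valid_intro; intro C K h1 h2
    rw [bangs_add] at h1; rw [nbs_add] at h2
    obtain ⟨hb1, hb2⟩ := suppMS_split0 h1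
    obtain ⟨K₁, K₂, rfl, hn1, hn2⟩ := suppMS_split h2
    have s1 := valid_elim ih1 C K₁ hb1 hn1
    have main := bangElim s1 (fun D hD hφ => by
      apply valid_elim ih2 D K₂
      · rw [bangs_add, pair_eq, bangs_add, bangs_bsingle]
        have : SuppMS D (0 + (0 + 0)) (bangs _ + ({_} + {_})) :=
          suppMS_add (suppMS_mono hD hb2)
            (suppMS_add (suppMS_single_mk hφ) (suppMS_single_mk hφ))
        simpa using this
      · rw [nbs_add, pair_eq, nbs_add, nbs_bsingle, add_zero, add_zero]
        exact suppMS_mono hD hn2)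
    exact supp_congr (by abel) main
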